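/- arXiv:0804.3500 — 2 statements merged into one kernel-verified Lean document; each statement's English description precedes it below -/
import Mathlib

section
/- Let (M, φ) be a size pair with reduced size function ℓ*. Then ℓ* is right-continuous in the variable x: for every (x,y) ∈ Δ⁺ there exists ε > 0 with x + ε < y such that ℓ*(x', y) = ℓ*(x, y) for all x' with x ≤ x' ≤ x + ε. -/
open Set Topology
open scoped ENNReal

noncomputable def rsf {M : Type*} [TopologicalSpace M] (φ : M → ℝ) (x y : ℝ) : ℕ :=
  Set.ncard {C : Set M | ∃ P, φ P ≤ x ∧ C = connectedComponentIn {Q | φ Q ≤ y} P}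

noncomputable def mult {M : Type*} [TopologicalSpace M] (φ : M → ℝ) (p : ℝ × ℝ) : ℤ :=
  sInf {z : ℤ | ∃ ε : ℝ, 0 < ε ∧ p.1 + ε < p.2 - ε ∧
    z = (rsf φ (p.1 + ε) (p.2 - ε) : ℤ) - (rsf φ (p.1 - ε) (p.2 - ε) : ℤ)
      - (rsf φ (p.1 + ε) (p.2 + ε) : ℤ) + (rsf φ (p.1 - ε) (p.2 + ε) : ℤ)}

noncomputable def multInf {M : Type*} [TopologicalSpace M] (φ : M → ℝ) (k : ℝ) : ℤ :=
  sInf {z : ℤ | ∃ ε : ℝ, 0 < ε ∧ k + ε < 1 / ε ∧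
    z = (rsf φ (k + ε) (1 / ε) : ℤ) - (rsf φ (k - ε) (1 / ε) : ℤ)}

open scoped Classical in
noncomputable def eDist (p q : ℝ × EReal) : ℝ≥0∞ :=
  if p.2 = ⊤ ∧ q.2 = ⊤ then ENNReal.ofReal |p.1 - q.1|
  else if p.2 = ⊤ ∨ q.2 = ⊤ then ⊤
  else ENNReal.ofReal (min (max |p.1 - q.1| |p.2.toReal - q.2.toReal|)
    (max ((p.2.toReal - p.1) / 2) ((q.2.toReal - q.1) / 2)))

def IsRepSeq {M : Type*} [TopologicalSpace M] (φ : M → ℝ) (a : ℕ → ℝ × EReal) : Prop :=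
  (∃ k : ℝ, a 0 = (k, ⊤) ∧ 0 < multInf φ k) ∧
  (∀ i : ℕ, 0 < i →
    (∃ x y : ℝ, a i = (x, (y : EReal)) ∧ x < y ∧ 0 < mult φ (x, y)) ∨
    (∃ x : ℝ, a i = (x, (x : EReal)))) ∧
  (∀ x y : ℝ, x < y → 0 < mult φ (x, y) →
    Set.ncard {i : ℕ | a i = (x, (y : EReal))} = (mult φ (x, y)).toNat) ∧
  {i : ℕ | ∃ x : ℝ, a i = (x, (x : EReal))}.Infinite

noncomputable def dMatchSeq (a b : ℕ → ℝ × EReal) : ℝ≥0∞ :=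
  ⨅ σ : {σ : ℕ → ℕ // Function.Bijective σ}, ⨆ i : ℕ, eDist (a i) (b (σ.1 i))

noncomputable def dMatch {M N : Type*} [TopologicalSpace M] [TopologicalSpace N]
    (φ : M → ℝ) (ψ : N → ℝ) : ℝ≥0∞ :=
  sInf {s : ℝ≥0∞ | ∃ a b, IsRepSeq φ a ∧ IsRepSeq ψ b ∧ s = dMatchSeq a b}

/-!
Take the connected components of the open set `{φ < y}` through the points of `{φ ≤ x}`. In a
locally connected space they are open, so their union `U` is an open neighbourhood of `{φ ≤ x}`,
and by compactness `{φ ≤ x'} ⊆ U` for all `x'` close to `x`. Every point of `U` lies in the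
component of `{φ ≤ y}` through some point of `{φ ≤ x}`, so raising `x` to such an `x'` adds no new
components.
-/

lemma eventually_sublevel_subset_of_isOpen {M : Type*} [TopologicalSpace M] [CompactSpace M]
    {f : M → ℝ} (hf : Continuous f) {U : Set M} (hU : IsOpen U) {x : ℝ}
    (hxU : {P | f P ≤ x} ⊆ U) :
    ∀ᶠ c in 𝓝 x, {P | f P ≤ c} ⊆ U := by
  have hlt : ∀ᶠ c in 𝓝 x, ∀ Q ∈ Uᶜ, c < f Q :=
    hU.isClosed_compl.isCompact.eventually_forall_of_forall_eventually fun Q hQ ↦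
      (isOpen_lt continuous_fst (hf.comp continuous_snd)).mem_nhds
        (show x < f Q from not_le.mp fun h ↦ hQ (hxU h))
  filter_upwards [hlt] with c hc P hP
  by_contra hPU
  exact (hc P hPU).not_ge hP

lemma image_connectedComponentIn_eq_of_subset_biUnion {M : Type*} [TopologicalSpace M]
    {K S T : Set M} (hST : S ⊆ T) (hT : T ⊆ ⋃ P ∈ S, connectedComponentIn K P) :
    connectedComponentIn K '' T = connectedComponentIn K '' S := by
  refine (image_mono hST).antisymm' ?_
  rintro _ ⟨Q, hQ, rfl⟩
  obtain ⟨P, hP, hQP⟩ := mem_iUnion₂.mp (hT hQ)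
  exact ⟨P, hP, connectedComponentIn_eq hQP⟩

lemma rsf_eq_ncard_image {M : Type*} [TopologicalSpace M] (φ : M → ℝ) (x y : ℝ) :
    rsf φ x y = (connectedComponentIn {Q | φ Q ≤ y} '' {P | φ P ≤ x}).ncard := by
  unfold rsf
  congr 1
  ext C
  simp [eq_comm]

theorem rsf_right_continuous_in_x_general
    {M : Type*} [TopologicalSpace M] [CompactSpace M] [LocallyConnectedSpace M] {φ : M → ℝ} (hφ : Continuous φ)
    (x y : ℝ) (hxy : x < y) :
    ∃ ε > 0, x + ε < y ∧ ∀ x' : ℝ, x ≤ x' → x' ≤ x + ε → rsf φ x' y = rsf φ x y := by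
  set U := ⋃ P ∈ {P | φ P ≤ x}, connectedComponentIn {Q | φ Q < y} P
  have hU : IsOpen U :=
    isOpen_biUnion fun _ _ ↦ (isOpen_lt hφ continuous_const).connectedComponentIn
  have hxU : {P | φ P ≤ x} ⊆ U := fun P hP ↦
    mem_biUnion hP (mem_connectedComponentIn (hP.trans_lt hxy : φ P < y))
  have hUK : U ⊆ ⋃ P ∈ {P | φ P ≤ x}, connectedComponentIn {Q | φ Q ≤ y} P :=
    biUnion_mono subset_rfl fun P _ ↦ connectedComponentIn_mono P fun Q (hQ : φ Q < y) ↦ hQ.le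
  have hnear : ∀ᶠ x' in 𝓝[≥] x, x' < y ∧ rsf φ x' y = rsf φ x y := by
    filter_upwards [nhdsWithin_le_nhds ((eventually_sublevel_subset_of_isOpen hφ hU hxU).and
      (eventually_lt_nhds hxy)), self_mem_nhdsWithin] with x' ⟨hx'U, hx'y⟩ (hxx' : x ≤ x')
    refine ⟨hx'y, ?_⟩
    rw [rsf_eq_ncard_image, rsf_eq_ncard_image]
    exact congrArg ncard <| image_connectedComponentIn_eq_of_subset_biUnion
      (fun P (hP : φ P ≤ x) ↦ hP.trans hxx') (hx'U.trans hUK)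
  obtain ⟨u, hxu, hu⟩ := mem_nhdsGE_iff_exists_Icc_subset.mp hnear
  refine ⟨u - x, sub_pos.mpr hxu, by linarith [(hu ⟨hxu.le, le_rfl⟩ : u < y ∧ _).1], ?_⟩
  intro x' hxx' hx'u
  exact (hu ⟨hxx', by linarith⟩).2

theorem rsf_right_continuous_in_x
    {M : Type*} [TopologicalSpace M] [CompactSpace M] [ConnectedSpace M] [LocallyConnectedSpace M] [T2Space M] {φ : M → ℝ} (hφ : Continuous φ)
    (x y : ℝ) (hxy : x < y) :
    ∃ ε > 0, x + ε < y ∧ ∀ x' : ℝ, x ≤ x' → x' ≤ x + ε → rsf φ x' y = rsf φ x y :=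
  rsf_right_continuous_in_x_general hφ x y hxy
end

section
/- Let (M, φ) be a size pair with reduced size function ℓ*. If p̄ = (x̄, ȳ) is a proper cornerpoint for ℓ* (i.e., μ(p̄) > 0), then: (i) for every x with x̄ ≤ x < ȳ, the function y ↦ ℓ*(x,y) is discontinuous at ȳ; and (ii) for every y with x̄ < y < ȳ, the function x ↦ ℓ*(x,y) is discontinuous at x̄. -/
open Set Topology
open scoped ENNReal

/-! Raising the level from `y` to `y' ≥ y` sends each component of `{φ ≤ y}` into a component of
`{φ ≤ y'}`, mapping the components that meet `{φ ≤ x}` onto those that do. So if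
`rsf φ x y = rsf φ x y'` this map is injective there, hence also at every lower level `a ≤ x`;
and if levels `x ≤ x'` have the same components at `y`, they have the same ones at every `y' ≥ y`.
Each alternating four-term sum in the definition of `mult φ (xb, yb)` is at least `mult > 0`,
while local constancy of `rsf` in `y` at `yb` (resp. in `x` at `xb`) makes it nonpositive. For
`x = xb` this also uses right-continuity of `rsf` in `x`: only finitely many components meet
`{φ ≤ x + ε}`, and each is compact. -/

section ConnectedComponentIn

variable {M : Type*} [TopologicalSpace M]

theorem IsClosed.connectedComponentIn {F : Set M} (hF : IsClosed F) (x : M) :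
    IsClosed (connectedComponentIn F x) := by
  by_cases hx : x ∈ F
  · refine isClosed_of_closure_subset <|
      isPreconnected_connectedComponentIn.closure.subset_connectedComponentIn
        (subset_closure (mem_connectedComponentIn hx)) ?_
    exact (closure_mono (connectedComponentIn_subset F x)).trans hF.closure_eq.subset
  · rw [connectedComponentIn_eq_empty hx]
    exact isClosed_empty

theorem biUnion_connectedComponentIn_of_subset {F G : Set M} (hFG : F ⊆ G) {x : M} (hx : x ∈ F) :
    ⋃ y ∈ connectedComponentIn F x, connectedComponentIn G y = connectedComponentIn G x :=
  subset_antisymm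
    (iUnion₂_subset fun _ hy => (connectedComponentIn_eq (connectedComponentIn_mono x hFG hy)).ge)
    (subset_biUnion_of_mem (u := fun y => connectedComponentIn G y) (mem_connectedComponentIn hx))

theorem image_image_connectedComponentIn {F G K : Set M} (hFG : F ⊆ G) (hKF : K ⊆ F) :
    (fun C => ⋃ y ∈ C, connectedComponentIn G y) '' (connectedComponentIn F '' K) =
      connectedComponentIn G '' K := by
  rw [image_image]
  exact image_congr fun x hx => biUnion_connectedComponentIn_of_subset hFG (hKF hx)

theorem image_connectedComponentIn_congr {F G K K' : Set M} (hFG : F ⊆ G) (hKF : K ⊆ F)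
    (hK'F : K' ⊆ F) (h : connectedComponentIn F '' K = connectedComponentIn F '' K') :
    connectedComponentIn G '' K = connectedComponentIn G '' K' := by
  rw [← image_image_connectedComponentIn hFG hKF, h, image_image_connectedComponentIn hFG hK'F]

/-- If no two components of `F` meeting `K` merge in `G ⊇ F`, the same holds for `K' ⊆ K`. -/
theorem ncard_image_connectedComponentIn_eq_of_subset {F G K K' : Set M} (hFG : F ⊆ G)
    (hKF : K ⊆ F) (hK'K : K' ⊆ K) (hfin : (connectedComponentIn F '' K).Finite)
    (h : (connectedComponentIn G '' K).ncard = (connectedComponentIn F '' K).ncard) :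
    (connectedComponentIn G '' K').ncard = (connectedComponentIn F '' K').ncard := by
  have hinj : InjOn (fun C => ⋃ y ∈ C, connectedComponentIn G y) (connectedComponentIn F '' K) :=
    injOn_of_ncard_image_eq (by rwa [image_image_connectedComponentIn hFG hKF]) hfin
  rw [← image_image_connectedComponentIn hFG (hK'K.trans hKF),
    (hinj.mono (image_mono hK'K)).ncard_image]

theorem finite_image_connectedComponentIn [LocallyConnectedSpace M] {K U F : Set M}
    (hK : IsCompact K) (hU : IsOpen U) (hKU : K ⊆ U) (hUF : U ⊆ F) :
    (connectedComponentIn F '' K).Finite := by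
  obtain ⟨t, htK, htfin, hKt⟩ := hK.elim_finite_subcover_image
    (fun x _ => hU.connectedComponentIn) fun x hx =>
      mem_biUnion hx (mem_connectedComponentIn (hKU hx))
  refine (htfin.image (connectedComponentIn F)).subset ?_
  rintro _ ⟨x, hx, rfl⟩
  obtain ⟨y, hyt, hxy⟩ := mem_iUnion₂.1 (hKt hx)
  exact ⟨y, hyt, connectedComponentIn_eq (connectedComponentIn_mono y hUF hxy)⟩

end ConnectedComponentIn

section SublevelComponents

theorem setOf_le_subset_setOf_le {M : Type*} {φ : M → ℝ} {x y : ℝ} (h : x ≤ y) :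
    {Q | φ Q ≤ x} ⊆ {Q | φ Q ≤ y} :=
  fun _ hQ => le_trans hQ h

variable {M : Type*} [TopologicalSpace M] {φ : M → ℝ}

def sublevelComponents (φ : M → ℝ) (x y : ℝ) : Set (Set M) :=
  connectedComponentIn {Q | φ Q ≤ y} '' {Q | φ Q ≤ x}

theorem rsf_eq_ncard_sublevelComponents (x y : ℝ) :
    rsf φ x y = (sublevelComponents φ x y).ncard := by
  unfold rsf sublevelComponents
  congr 1
  ext C
  simp only [mem_ofPred_eq, mem_image, eq_comm]

theorem sublevelComponents_mono {x x' : ℝ} (h : x ≤ x') (y : ℝ) :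
    sublevelComponents φ x y ⊆ sublevelComponents φ x' y :=
  image_mono (setOf_le_subset_setOf_le h)

theorem sublevelComponents_finite [CompactSpace M] [LocallyConnectedSpace M]
    (hφ : Continuous φ) {x y : ℝ} (hxy : x < y) : (sublevelComponents φ x y).Finite :=
  finite_image_connectedComponentIn (isClosed_le hφ continuous_const).isCompact
    (isOpen_lt hφ continuous_const) (fun _ hQ => lt_of_le_of_lt hQ hxy)
    fun _ hQ => le_of_lt (show φ _ < y from hQ)

theorem rsf_mono_left [CompactSpace M] [LocallyConnectedSpace M] (hφ : Continuous φ)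
    {x x' y : ℝ} (h : x ≤ x') (hx' : x' < y) : rsf φ x y ≤ rsf φ x' y := by
  simp only [rsf_eq_ncard_sublevelComponents]
  exact ncard_le_ncard (sublevelComponents_mono h y) (sublevelComponents_finite hφ hx')

theorem rsf_anti_right [CompactSpace M] [LocallyConnectedSpace M] (hφ : Continuous φ)
    {x y y' : ℝ} (hx : x < y) (h : y ≤ y') : rsf φ x y' ≤ rsf φ x y := by
  simp only [rsf_eq_ncard_sublevelComponents]
  rw [sublevelComponents, ← image_image_connectedComponentIn (setOf_le_subset_setOf_le h)
    (setOf_le_subset_setOf_le hx.le)]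
  exact ncard_image_le (sublevelComponents_finite hφ hx)

theorem rsf_eq_of_le_of_rsf_eq [CompactSpace M] [LocallyConnectedSpace M] (hφ : Continuous φ)
    {a x y y' : ℝ} (ha : a ≤ x) (hx : x < y) (hy : y ≤ y') (h : rsf φ x y = rsf φ x y') :
    rsf φ a y = rsf φ a y' := by
  simp only [rsf_eq_ncard_sublevelComponents] at h ⊢
  exact (ncard_image_connectedComponentIn_eq_of_subset (setOf_le_subset_setOf_le hy)
    (setOf_le_subset_setOf_le hx.le) (setOf_le_subset_setOf_le ha)
    (sublevelComponents_finite hφ hx) h.symm).symm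

theorem rsf_eq_of_rsf_eq_of_le [CompactSpace M] [LocallyConnectedSpace M] (hφ : Continuous φ)
    {x x' y y' : ℝ} (hx : x ≤ x') (hx' : x' < y) (hy : y ≤ y') (h : rsf φ x y = rsf φ x' y) :
    rsf φ x y' = rsf φ x' y' := by
  have heq : sublevelComponents φ x y = sublevelComponents φ x' y := by
    refine eq_of_subset_of_ncard_le (sublevelComponents_mono hx y) ?_
      (sublevelComponents_finite hφ hx')
    simp only [← rsf_eq_ncard_sublevelComponents, h, le_rfl]
  simp only [rsf_eq_ncard_sublevelComponents, sublevelComponents]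
  rw [image_connectedComponentIn_congr (setOf_le_subset_setOf_le hy)
    (setOf_le_subset_setOf_le (hx.trans hx'.le)) (setOf_le_subset_setOf_le hx'.le) heq]

/-- `φ` attains its minimum, which exceeds `a`, on the compact component `C`. -/
theorem eventually_notMem_sublevelComponents_add [CompactSpace M] (hφ : Continuous φ)
    {a b y : ℝ} (hby : b ≤ y) {C : Set M} (hC : C ∈ sublevelComponents φ b y)
    (hCa : C ∉ sublevelComponents φ a y) :
    ∀ᶠ ε in 𝓝[>] 0, C ∉ sublevelComponents φ (a + ε) y := by
  obtain ⟨P, hPb, rfl⟩ := hC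
  have hPb : φ P ≤ b := hPb
  have hCc : IsCompact (connectedComponentIn {Q | φ Q ≤ y} P) :=
    ((isClosed_le hφ continuous_const).connectedComponentIn P).isCompact
  have hPC : P ∈ connectedComponentIn {Q | φ Q ≤ y} P :=
    mem_connectedComponentIn (show φ P ≤ y from hPb.trans hby)
  obtain ⟨Q, hQC, hQmin⟩ := hCc.exists_isMinOn ⟨P, hPC⟩ hφ.continuousOn
  have haQ : a < φ Q := by
    by_contra! hQa
    exact hCa ⟨Q, hQa, (connectedComponentIn_eq hQC).symm⟩
  filter_upwards [Ioo_mem_nhdsGT (sub_pos.2 haQ)] with ε hε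
  rintro ⟨R, hRa, hRC⟩
  have hRa : φ R ≤ a + ε := hRa
  have hQP : φ Q ≤ φ P := hQmin hPC
  have hRy : φ R ≤ y := by linarith [hε.2]
  have hQR : φ Q ≤ φ R := hQmin (hRC ▸ mem_connectedComponentIn hRy)
  linarith [hε.2]

theorem eventually_rsf_add_eq [CompactSpace M] [LocallyConnectedSpace M] (hφ : Continuous φ)
    {a y : ℝ} (hay : a < y) : ∀ᶠ ε in 𝓝[>] 0, rsf φ (a + ε) y = rsf φ a y := by
  obtain ⟨b, hab, hby⟩ := exists_between hay
  have hfin := (sublevelComponents_finite hφ hby).sdiff (t := sublevelComponents φ a y)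
  filter_upwards [hfin.eventually_all.2 fun C hC =>
      eventually_notMem_sublevelComponents_add hφ hby.le hC.1 hC.2,
    Ioo_mem_nhdsGT (sub_pos.2 hab)] with ε hC hε
  simp only [rsf_eq_ncard_sublevelComponents]
  congr 1
  refine subset_antisymm (fun C hCε => ?_) (sublevelComponents_mono (by linarith [hε.1]) y)
  by_contra hCa
  exact hC C ⟨sublevelComponents_mono (by linarith [hε.2]) y hCε, hCa⟩ hCε

end SublevelComponents

section Cornerpoint

variable {M : Type*} [TopologicalSpace M] {φ : M → ℝ}

theorem mult_le_of_pos {x y ε : ℝ} (hμ : 0 < mult φ (x, y)) (hε : 0 < ε) (h : x + ε < y - ε) :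
    mult φ (x, y) ≤ (rsf φ (x + ε) (y - ε) : ℤ) - (rsf φ (x - ε) (y - ε) : ℤ)
      - (rsf φ (x + ε) (y + ε) : ℤ) + (rsf φ (x - ε) (y + ε) : ℤ) := by
  refine csInf_le ?_ ⟨ε, hε, h, rfl⟩
  by_contra hb
  rw [mult, Int.csInf_of_not_bddBelow hb] at hμ
  exact hμ.false

variable [CompactSpace M] [LocallyConnectedSpace M]

theorem not_rsf_locally_const_right (hφ : Continuous φ) {xb yb x : ℝ}
    (hμ : 0 < mult φ (xb, yb)) (hx : xb ≤ x) (hxy : x < yb) :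
    ¬ ∃ ε > 0, ∀ y' : ℝ, x < y' → |y' - yb| < ε → rsf φ x y' = rsf φ x yb := by
  rintro ⟨ε₀, hε₀, hconst⟩
  set δ := min (ε₀ / 2) ((yb - x) / 3)
  have hδ : 0 < δ := lt_min (by linarith) (by linarith)
  have hδε₀ : δ ≤ ε₀ / 2 := min_le_left _ _
  have hδx : δ ≤ (yb - x) / 3 := min_le_right _ _
  have hnear : ∀ y', yb - δ ≤ y' → y' ≤ yb + δ → rsf φ x y' = rsf φ x yb := fun y' h₁ h₂ =>
    hconst y' (by linarith) (abs_sub_lt_iff.2 ⟨by linarith, by linarith⟩)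
  have hprop : ∀ a ≤ x, ∀ y₁ y₂, yb - δ ≤ y₁ → y₁ ≤ y₂ → y₂ ≤ yb + δ →
      rsf φ a y₁ = rsf φ a y₂ := fun a ha y₁ y₂ h₁ h₁₂ h₂ =>
    rsf_eq_of_le_of_rsf_eq hφ ha (by linarith) h₁₂
      ((hnear y₁ h₁ (by linarith)).trans (hnear y₂ (by linarith) h₂).symm)
  obtain ⟨ε, hright, hε, hεδ⟩ := ((eventually_rsf_add_eq hφ (show xb < yb - δ by linarith)).and
    (Ioc_mem_nhdsGT hδ)).exists
  have hlow := hprop (xb - ε) (by linarith) (yb - ε) (yb + ε) (by linarith) (by linarith)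
    (by linarith)
  have hxb := hprop xb hx (yb - δ) (yb + ε) le_rfl (by linarith) (by linarith)
  have h₁ := rsf_anti_right hφ (show xb + ε < yb - δ by linarith)
    (show yb - δ ≤ yb - ε by linarith)
  have h₂ := rsf_mono_left hφ (show xb ≤ xb + ε by linarith) (show xb + ε < yb + ε by linarith)
  have hμε := mult_le_of_pos hμ hε (by linarith)
  omega

theorem not_rsf_locally_const_left (hφ : Continuous φ) {xb yb y : ℝ}
    (hμ : 0 < mult φ (xb, yb)) (hxy : xb < y) (hy : y < yb) :
    ¬ ∃ ε > 0, ∀ x' : ℝ, x' < y → |x' - xb| < ε → rsf φ x' y = rsf φ xb y := by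
  rintro ⟨ε₀, hε₀, hconst⟩
  set ε := min (ε₀ / 2) (min ((y - xb) / 2) ((yb - y) / 2))
  have hε : 0 < ε := lt_min (by linarith) (lt_min (by linarith) (by linarith))
  have hεε₀ : ε ≤ ε₀ / 2 := min_le_left _ _
  have hεy : ε ≤ (y - xb) / 2 := (min_le_right _ _).trans (min_le_left _ _)
  have hεyb : ε ≤ (yb - y) / 2 := (min_le_right _ _).trans (min_le_right _ _)
  have hy' : rsf φ (xb - ε) y = rsf φ (xb + ε) y :=
    (hconst _ (by linarith) (abs_sub_lt_iff.2 ⟨by linarith, by linarith⟩)).trans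
      (hconst _ (by linarith) (abs_sub_lt_iff.2 ⟨by linarith, by linarith⟩)).symm
  have hlow := rsf_eq_of_rsf_eq_of_le hφ (by linarith) (by linarith)
    (show y ≤ yb - ε by linarith) hy'
  have hhigh := rsf_eq_of_rsf_eq_of_le hφ (by linarith) (by linarith)
    (show y ≤ yb + ε by linarith) hy'
  have hμε := mult_le_of_pos hμ hε (by linarith)
  omega

end Cornerpoint

theorem cornerpoint_propagates_discontinuities_general
    {M : Type*} [TopologicalSpace M] [CompactSpace M] [LocallyConnectedSpace M] {φ : M → ℝ} (hφ : Continuous φ)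
    (xb yb : ℝ) (hμ : 0 < mult φ (xb, yb)) :
    (∀ x : ℝ, xb ≤ x → x < yb →
      ¬ ∃ ε > 0, ∀ y' : ℝ, x < y' → |y' - yb| < ε → rsf φ x y' = rsf φ x yb) ∧
    (∀ y : ℝ, xb < y → y < yb →
      ¬ ∃ ε > 0, ∀ x' : ℝ, x' < y → |x' - xb| < ε → rsf φ x' y = rsf φ xb y) :=
  ⟨fun _ hx hxy => not_rsf_locally_const_right hφ hμ hx hxy,
    fun _ hxy hy => not_rsf_locally_const_left hφ hμ hxy hy⟩

theorem cornerpoint_propagates_discontinuities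
    {M : Type*} [TopologicalSpace M] [CompactSpace M] [ConnectedSpace M] [LocallyConnectedSpace M] [T2Space M] {φ : M → ℝ} (hφ : Continuous φ)
    (xb yb : ℝ) (hd : xb < yb) (hμ : 0 < mult φ (xb, yb)) :
    (∀ x : ℝ, xb ≤ x → x < yb →
      ¬ ∃ ε > 0, ∀ y' : ℝ, x < y' → |y' - yb| < ε → rsf φ x y' = rsf φ x yb) ∧
    (∀ y : ℝ, xb < y → y < yb →
      ¬ ∃ ε > 0, ∀ x' : ℝ, x' < y → |x' - xb| < ε → rsf φ x' y = rsf φ xb y) :=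
  cornerpoint_propagates_discontinuities_general hφ xb yb hμ
end
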